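/- arXiv:2008.01665 — 3 statements merged into one kernel-verified Lean document; each statement's English description precedes it below -/
import Mathlib

section
/- Let μ and ν be probability mass functions on a finite type Ω such that ν(o) > 0 whenever μ(o) > 0, and define α(λ) = log Σ_{o : μ(o)>0} μ(o)·(μ(o)/ν(o))^λ. Then for every real λ ≥ 0, every real ε, and every subset S ⊆ Ω, μ(S) ≤ exp(ε)·ν(S) + exp(α(λ) − λ·ε). In particular, the pair (μ, ν) satisfies the (ε, δ)-differential-privacy inequality with δ = exp(α(λ) − λ·ε). -/
/-!
Chernoff's argument, pointwise. Where `μ(o) ≤ e^ε ν(o)` there is nothing to prove; elsewhere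
`μ(o)/ν(o) > e^ε`, so `μ(o) ≤ μ(o) (μ(o)/ν(o))^λ e^{-λε}`. Summing over `S` and enlarging the
sum of the second terms to the whole support of `μ` gives `μ(S) ≤ e^ε ν(S) + E_μ[(μ/ν)^λ] e^{-λε}`.
-/

open scoped Classical

open Real Finset

lemma le_exp_mul_add_mul_rpow_div {a b : ℝ} (ha : 0 < a) (hb : 0 < b) {lam : ℝ} (hlam : 0 ≤ lam)
    (ε : ℝ) : a ≤ exp ε * b + a * (a / b) ^ lam / exp (lam * ε) := by
  have hexp_b : 0 ≤ exp ε * b := by positivity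
  rcases le_or_gt a (exp ε * b) with hab | hab
  · have : 0 ≤ a * (a / b) ^ lam / exp (lam * ε) := by positivity
    linarith
  · have hratio : exp ε ≤ a / b := (le_div_iff₀ hb).2 hab.le
    have hpow : exp (lam * ε) ≤ (a / b) ^ lam := by
      rw [mul_comm, exp_mul]
      exact rpow_le_rpow (exp_pos ε).le hratio hlam
    have : a ≤ a * (a / b) ^ lam / exp (lam * ε) := by
      rw [le_div_iff₀ (exp_pos _)]
      exact mul_le_mul_of_nonneg_left hpow ha.le
    linarith

lemma sum_le_exp_mul_sum_add_moment_div {Ω : Type*} [Fintype Ω] {μ ν : Ω → ℝ}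
    (hν0 : ∀ o, 0 ≤ ν o) (hsupp : ∀ o, 0 < μ o → 0 < ν o) {lam : ℝ} (hlam : 0 ≤ lam) (ε : ℝ)
    (S : Finset Ω) :
    ∑ o ∈ S, μ o ≤ exp ε * ∑ o ∈ S, ν o +
      (∑ o ∈ univ.filter (fun o => 0 < μ o), μ o * (μ o / ν o) ^ lam) / exp (lam * ε) := by
  set m : Ω → ℝ := fun o => if 0 < μ o then μ o * (μ o / ν o) ^ lam else 0
  have hm0 : ∀ o, 0 ≤ m o := fun o => by
    by_cases h : 0 < μ o
    · have := hsupp o h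
      simp only [m, if_pos h]
      positivity
    · simp only [m, if_neg h, le_refl]
  have hpoint : ∀ o, μ o ≤ exp ε * ν o + m o / exp (lam * ε) := fun o => by
    by_cases h : 0 < μ o
    · simpa only [m, if_pos h] using le_exp_mul_add_mul_rpow_div h (hsupp o h) hlam ε
    · have : 0 ≤ exp ε * ν o := mul_nonneg (exp_pos ε).le (hν0 o)
      simp only [m, if_neg h, zero_div, add_zero]
      linarith
  calc ∑ o ∈ S, μ o ≤ ∑ o ∈ S, (exp ε * ν o + m o / exp (lam * ε)) :=
        sum_le_sum fun o _ => hpoint o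
    _ = exp ε * ∑ o ∈ S, ν o + (∑ o ∈ S, m o) / exp (lam * ε) := by
      rw [sum_add_distrib, mul_sum, sum_div]
    _ ≤ exp ε * ∑ o ∈ S, ν o + (∑ o, m o) / exp (lam * ε) := by
      gcongr
      · exact fun o _ _ => hm0 o
      · exact subset_univ S
    _ = _ := by rw [sum_filter]

lemma div_exp_le_exp_log_sub (x y : ℝ) : x / exp y ≤ exp (log x - y) := by
  rw [exp_sub]
  gcongr
  exact le_exp_log x

theorem moments_accountant_tail_bound_general {Ω : Type*} [Fintype Ω]
    (μ ν : Ω → ℝ)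
    (hν0 : ∀ o, 0 ≤ ν o)
    (hsupp : ∀ o, 0 < μ o → 0 < ν o)
    (lam : ℝ) (hlam : 0 ≤ lam) (ε : ℝ) :
    ∀ S : Finset Ω, ∑ o ∈ S, μ o ≤
      Real.exp ε * ∑ o ∈ S, ν o +
        Real.exp
          ((Real.log (∑ o ∈ Finset.univ.filter (fun o => 0 < μ o),
              μ o * (μ o / ν o) ^ lam)) - lam * ε) := fun S =>
  (sum_le_exp_mul_sum_add_moment_div hν0 hsupp hlam ε S).trans
    (add_le_add_right (div_exp_le_exp_log_sub _ _) _)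

/-- Tail bound of the moments accountant: for every `λ ≥ 0` and every `ε`, the pair
`(μ, ν)` satisfies the `(ε, δ)`-differential-privacy inequality with
`δ = exp(α(λ) - λ·ε)`, where `α(λ) = log Σ_{μ(o)>0} μ(o)·(μ(o)/ν(o))^λ`. -/
theorem moments_accountant_tail_bound {Ω : Type*} [Fintype Ω]
    (μ ν : Ω → ℝ)
    (hμ0 : ∀ o, 0 ≤ μ o) (hμ1 : ∑ o, μ o = 1)
    (hν0 : ∀ o, 0 ≤ ν o) (hν1 : ∑ o, ν o = 1)
    (hsupp : ∀ o, 0 < μ o → 0 < ν o)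
    (lam : ℝ) (hlam : 0 ≤ lam) (ε : ℝ) :
    ∀ S : Finset Ω, ∑ o ∈ S, μ o ≤
      Real.exp ε * ∑ o ∈ S, ν o +
        Real.exp
          ((Real.log (∑ o ∈ Finset.univ.filter (fun o => 0 < μ o),
              μ o * (μ o / ν o) ^ lam)) - lam * ε) :=
  moments_accountant_tail_bound_general μ ν hν0 hsupp lam hlam ε
end

section
/- Let μ₁, ν₁ be probability mass functions on a finite type Ω₁ and μ₂, ν₂ be probability mass functions on a finite type Ω₂, with ν₁(o) > 0 whenever μ₁(o) > 0 and ν₂(o) > 0 whenever μ₂(o) > 0. Let μ and ν be the product probability mass functions on Ω₁ × Ω₂ given by μ(o₁, o₂) = μ₁(o₁)·μ₂(o₂) and ν(o₁, o₂) = ν₁(o₁)·ν₂(o₂). Then for every real λ, the log moment generating function of the privacy loss of the pair (μ, ν) equals the sum of those of (μ₁, ν₁) and (μ₂, ν₂): log Σ_{(o₁,o₂)} μ(o₁,o₂)·(μ(o₁,o₂)/ν(o₁,o₂))^λ = log Σ_{o₁} μ₁(o₁)·(μ₁(o₁)/ν₁(o₁))^λ + log Σ_{o₂} μ₂(o₂)·(μ₂(o₂)/ν₂(o₂))^λ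 (sums taken over points of positive μ-mass). -/
/-!
On the product space the likelihood ratio factorises, `μ₁μ₂ / ν₁ν₂ = (μ₁/ν₁)(μ₂/ν₂)`, and the
support of `μ₁ ⊗ μ₂` is the product of the supports, so the moment generating function of the
privacy loss is multiplicative. It is positive because each `μᵢ` has a point of positive mass
at which `νᵢ` is positive too; hence its logarithm is additive.
-/

open scoped Classical
open Finset

noncomputable section

variable {Ω Ω₁ Ω₂ : Type*} [Fintype Ω] [Fintype Ω₁] [Fintype Ω₂]

def privacyLossMGF (μ ν : Ω → ℝ) (lam : ℝ) : ℝ :=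
  ∑ o ∈ univ.filter (fun o => 0 < μ o), μ o * (μ o / ν o) ^ lam

lemma filter_pos_mul_eq_product {f : Ω₁ → ℝ} {g : Ω₂ → ℝ} (hf : ∀ o, 0 ≤ f o)
    (hg : ∀ o, 0 ≤ g o) :
    univ.filter (fun o : Ω₁ × Ω₂ => 0 < f o.1 * g o.2) =
      univ.filter (fun o => 0 < f o) ×ˢ univ.filter (fun o => 0 < g o) := by
  rw [← filter_product, univ_product_univ]
  refine filter_congr fun o _ => ⟨fun h => ⟨?_, ?_⟩, fun h => mul_pos h.1 h.2⟩
  · exact pos_of_mul_pos_left h (hg o.2)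
  · exact pos_of_mul_pos_right h (hf o.1)

lemma privacyLossMGF_prod {μ₁ ν₁ : Ω₁ → ℝ} {μ₂ ν₂ : Ω₂ → ℝ}
    (hμ₁ : ∀ o, 0 ≤ μ₁ o) (hμ₂ : ∀ o, 0 ≤ μ₂ o)
    (hsupp₁ : ∀ o, 0 < μ₁ o → 0 < ν₁ o) (hsupp₂ : ∀ o, 0 < μ₂ o → 0 < ν₂ o) (lam : ℝ) :
    privacyLossMGF (fun o : Ω₁ × Ω₂ => μ₁ o.1 * μ₂ o.2) (fun o => ν₁ o.1 * ν₂ o.2) lam =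
      privacyLossMGF μ₁ ν₁ lam * privacyLossMGF μ₂ ν₂ lam := by
  unfold privacyLossMGF
  rw [filter_pos_mul_eq_product hμ₁ hμ₂, sum_product, sum_mul_sum]
  refine sum_congr rfl fun o₁ h₁ => sum_congr rfl fun o₂ h₂ => ?_
  have hpos₁ : 0 < μ₁ o₁ := (mem_filter.1 h₁).2
  have hpos₂ : 0 < μ₂ o₂ := (mem_filter.1 h₂).2
  have hratio₁ : 0 ≤ μ₁ o₁ / ν₁ o₁ := (div_pos hpos₁ (hsupp₁ o₁ hpos₁)).le
  have hratio₂ : 0 ≤ μ₂ o₂ / ν₂ o₂ := (div_pos hpos₂ (hsupp₂ o₂ hpos₂)).le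
  rw [mul_div_mul_comm, Real.mul_rpow hratio₁ hratio₂]
  ring

lemma privacyLossMGF_pos {μ ν : Ω → ℝ} (hμ1 : ∑ o, μ o = 1)
    (hsupp : ∀ o, 0 < μ o → 0 < ν o) (lam : ℝ) : 0 < privacyLossMGF μ ν lam := by
  obtain ⟨o, -, ho⟩ : ∃ o ∈ univ, (0 : ℝ) < μ o :=
    exists_lt_of_sum_lt (by simp [hμ1])
  refine sum_pos (fun o' ho' => ?_) ⟨o, mem_filter.2 ⟨mem_univ o, ho⟩⟩
  have hpos : 0 < μ o' := (mem_filter.1 ho').2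
  have := hsupp o' hpos
  positivity

end

theorem moments_accountant_composability_general {Ω₁ Ω₂ : Type*} [Fintype Ω₁] [Fintype Ω₂]
    (μ₁ ν₁ : Ω₁ → ℝ) (μ₂ ν₂ : Ω₂ → ℝ)
    (hμ₁0 : ∀ o, 0 ≤ μ₁ o) (hμ₁1 : ∑ o, μ₁ o = 1)
    (hμ₂0 : ∀ o, 0 ≤ μ₂ o) (hμ₂1 : ∑ o, μ₂ o = 1)
    (hsupp₁ : ∀ o, 0 < μ₁ o → 0 < ν₁ o)
    (hsupp₂ : ∀ o, 0 < μ₂ o → 0 < ν₂ o)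
    (lam : ℝ) :
    Real.log (∑ o ∈ Finset.univ.filter (fun o : Ω₁ × Ω₂ => 0 < μ₁ o.1 * μ₂ o.2),
        (μ₁ o.1 * μ₂ o.2) * ((μ₁ o.1 * μ₂ o.2) / (ν₁ o.1 * ν₂ o.2)) ^ lam) =
      Real.log (∑ o₁ ∈ Finset.univ.filter (fun o₁ => 0 < μ₁ o₁),
          μ₁ o₁ * (μ₁ o₁ / ν₁ o₁) ^ lam) +
      Real.log (∑ o₂ ∈ Finset.univ.filter (fun o₂ => 0 < μ₂ o₂),
          μ₂ o₂ * (μ₂ o₂ / ν₂ o₂) ^ lam) := by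
  change Real.log (privacyLossMGF _ _ lam) =
    Real.log (privacyLossMGF μ₁ ν₁ lam) + Real.log (privacyLossMGF μ₂ ν₂ lam)
  rw [privacyLossMGF_prod hμ₁0 hμ₂0 hsupp₁ hsupp₂,
    Real.log_mul (privacyLossMGF_pos hμ₁1 hsupp₁ lam).ne'
      (privacyLossMGF_pos hμ₂1 hsupp₂ lam).ne']

/-- Composability of the moments accountant for two independently composed mechanisms:
the log moment generating function of the privacy loss of the product pair equals the
sum of the log moment generating functions of the two component pairs. -/
theorem moments_accountant_composability {Ω₁ Ω₂ : Type*} [Fintype Ω₁] [Fintype Ω₂]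
    (μ₁ ν₁ : Ω₁ → ℝ) (μ₂ ν₂ : Ω₂ → ℝ)
    (hμ₁0 : ∀ o, 0 ≤ μ₁ o) (hμ₁1 : ∑ o, μ₁ o = 1)
    (hν₁0 : ∀ o, 0 ≤ ν₁ o) (hν₁1 : ∑ o, ν₁ o = 1)
    (hμ₂0 : ∀ o, 0 ≤ μ₂ o) (hμ₂1 : ∑ o, μ₂ o = 1)
    (hν₂0 : ∀ o, 0 ≤ ν₂ o) (hν₂1 : ∑ o, ν₂ o = 1)
    (hsupp₁ : ∀ o, 0 < μ₁ o → 0 < ν₁ o)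
    (hsupp₂ : ∀ o, 0 < μ₂ o → 0 < ν₂ o)
    (lam : ℝ) :
    Real.log (∑ o ∈ Finset.univ.filter (fun o : Ω₁ × Ω₂ => 0 < μ₁ o.1 * μ₂ o.2),
        (μ₁ o.1 * μ₂ o.2) * ((μ₁ o.1 * μ₂ o.2) / (ν₁ o.1 * ν₂ o.2)) ^ lam) =
      Real.log (∑ o₁ ∈ Finset.univ.filter (fun o₁ => 0 < μ₁ o₁),
          μ₁ o₁ * (μ₁ o₁ / ν₁ o₁) ^ lam) +
      Real.log (∑ o₂ ∈ Finset.univ.filter (fun o₂ => 0 < μ₂ o₂),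
          μ₂ o₂ * (μ₂ o₂ / ν₂ o₂) ^ lam) :=
  moments_accountant_composability_general μ₁ ν₁ μ₂ ν₂ hμ₁0 hμ₁1 hμ₂0 hμ₂1 hsupp₁ hsupp₂ lam
end

section
/- Let k be a natural number, let Ω₁, …, Ω_k be finite types, and for each i let μ_i, ν_i be probability mass functions on Ω_i such that for every subset S ⊆ Ω_i, μ_i(S) ≤ exp(ε)·ν_i(S) + δ (with ε ∈ ℝ and δ ≥ 0). Let μ and ν be the product probability mass functions on Ω₁ × ⋯ × Ω_k given by μ(o₁,…,o_k) = ∏_i μ_i(o_i) and ν(o₁,…,o_k) = ∏_i ν_i(o_i). Then for every subset S ⊆ Ω₁ × ⋯ × Ω_k, μ(S) ≤ exp(k·ε)·ν(S) + k·δ. -/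
/-! Truncate each `μ i` to `t i = min (μ i) (exp ε • ν i)`. Applying the hypothesis to the set
where `μ i > exp ε • ν i` shows that the truncated mass `∑ (μ i - t i)` is at most `δ`. Pointwise
`∏ t i ≤ exp (k ε) ∏ ν i`, and the mass by which `∏ μ i` exceeds `∏ t i` is bounded by a union
bound over the coordinate that got truncated, contributing at most `δ` per coordinate. -/

open Finset

theorem Finset.prod_sub_prod_le_sum_mul_prod_erase {ι R : Type*} [DecidableEq ι] [CommRing R]
    [PartialOrder R] [IsOrderedRing R] (s : Finset ι) {a b : ι → R}
    (hb : ∀ i ∈ s, 0 ≤ b i) (hba : ∀ i ∈ s, b i ≤ a i) :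
    ∏ i ∈ s, a i - ∏ i ∈ s, b i ≤ ∑ j ∈ s, (a j - b j) * ∏ i ∈ s.erase j, a i := by
  induction s using Finset.induction_on with
  | empty => simp
  | insert x s hx ih =>
    have hb' : ∀ i ∈ s, 0 ≤ b i := fun i hi => hb i (mem_insert_of_mem hi)
    have hba' : ∀ i ∈ s, b i ≤ a i := fun i hi => hba i (mem_insert_of_mem hi)
    have herase (j) (hj : j ∈ s) :
        ∏ i ∈ (insert x s).erase j, a i = a x * ∏ i ∈ s.erase j, a i := by
      rw [erase_insert_of_ne (ne_of_mem_of_not_mem hj hx).symm, prod_insert (by simp [hx])]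
    rw [prod_insert hx, prod_insert hx, sum_insert hx, erase_insert hx,
      sum_congr rfl fun j hj => by rw [herase j hj, mul_left_comm], ← mul_sum]
    have hsum : 0 ≤ ∑ j ∈ s, (a j - b j) * ∏ i ∈ s.erase j, a i :=
      sum_nonneg fun j hj => mul_nonneg (sub_nonneg.2 (hba' j hj)) <|
        prod_nonneg fun i hi => (hb' i (mem_of_mem_erase hi)).trans (hba' i (mem_of_mem_erase hi))
    calc a x * ∏ i ∈ s, a i - b x * ∏ i ∈ s, b i
        = (a x - b x) * ∏ i ∈ s, a i + b x * (∏ i ∈ s, a i - ∏ i ∈ s, b i) := by ring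
      _ ≤ (a x - b x) * ∏ i ∈ s, a i + a x * ∑ j ∈ s, (a j - b j) * ∏ i ∈ s.erase j, a i :=
        add_le_add le_rfl <|
          (mul_le_mul_of_nonneg_left (ih hb' hba') (hb x (mem_insert_self x s))).trans
            (mul_le_mul_of_nonneg_right (hba x (mem_insert_self x s)) hsum)

theorem Fintype.sum_mul_prod_erase_eq {ι R : Type*} [Fintype ι] [DecidableEq ι] [CommSemiring R]
    {κ : ι → Type*} [∀ i, Fintype (κ i)] (f : ∀ i, κ i → R) (j : ι) (g : κ j → R) :
    ∑ x : ∀ i, κ i, g (x j) * ∏ i ∈ univ.erase j, f i (x i) =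
      (∑ y, g y) * ∏ i ∈ univ.erase j, ∑ y, f i y := by
  have hupdate (φ : ∀ i, (κ i → R) → R) :
      ∏ i, φ i (Function.update f j g i) = φ j g * ∏ i ∈ univ.erase j, φ i (f i) := by
    rw [← mul_prod_erase univ _ (mem_univ j), Function.update_self]
    exact congrArg _ <| Finset.prod_congr rfl fun i hi => by
      rw [Function.update_of_ne (ne_of_mem_erase hi)]
  calc ∑ x : ∀ i, κ i, g (x j) * ∏ i ∈ univ.erase j, f i (x i)
      = ∑ x : ∀ i, κ i, ∏ i, Function.update f j g i (x i) :=
        Finset.sum_congr rfl fun x _ => (hupdate fun i h => h (x i)).symm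
    _ = ∏ i, ∑ y, Function.update f j g i y := (Fintype.prod_sum _).symm
    _ = (∑ y, g y) * ∏ i ∈ univ.erase j, ∑ y, f i y := hupdate fun _ h => ∑ y, h y

theorem Fintype.sum_prod_sub_prod_le_sum_sum_sub {ι : Type*} [Fintype ι] [DecidableEq ι]
    {κ : ι → Type*} [∀ i, Fintype (κ i)] {a b : ∀ i, κ i → ℝ} (hb : ∀ i y, 0 ≤ b i y)
    (hba : ∀ i y, b i y ≤ a i y) (ha : ∀ i, ∑ y, a i y = 1) :
    ∑ x : ∀ i, κ i, (∏ i, a i (x i) - ∏ i, b i (x i)) ≤ ∑ i, ∑ y, (a i y - b i y) :=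
  calc ∑ x : ∀ i, κ i, (∏ i, a i (x i) - ∏ i, b i (x i))
      ≤ ∑ x : ∀ i, κ i, ∑ j, (a j (x j) - b j (x j)) * ∏ i ∈ univ.erase j, a i (x i) :=
        Finset.sum_le_sum fun x _ => prod_sub_prod_le_sum_mul_prod_erase _
          (fun i _ => hb i (x i)) (fun i _ => hba i (x i))
    _ = ∑ i, ∑ y, (a i y - b i y) := by
        rw [Finset.sum_comm]
        simp only [Fintype.sum_mul_prod_erase_eq a _ (fun y => a _ y - b _ y), ha,
          prod_const_one, mul_one]

theorem sum_sub_min_le_of_forall_sum_le {α : Type*} [Fintype α] {μ ν : α → ℝ} {c δ : ℝ}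
    (h : ∀ S : Finset α, ∑ o ∈ S, μ o ≤ c * ∑ o ∈ S, ν o + δ) :
    ∑ o, (μ o - min (μ o) (c * ν o)) ≤ δ :=
  calc ∑ o, (μ o - min (μ o) (c * ν o))
      = ∑ o ∈ univ.filter (fun o => c * ν o < μ o), (μ o - c * ν o) := by
        rw [sum_filter]
        refine sum_congr rfl fun o _ => ?_
        split_ifs with ho
        · rw [min_eq_right ho.le]
        · rw [min_eq_left (not_lt.1 ho), sub_self]
    _ ≤ δ := by
        rw [sum_sub_distrib, ← mul_sum]
        linarith [h (univ.filter (fun o => c * ν o < μ o))]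

theorem dp_composition_general (k : ℕ) (Ω : Fin k → Type*) [∀ i, Fintype (Ω i)]
    (μ ν : (i : Fin k) → Ω i → ℝ)
    (hμ0 : ∀ i o, 0 ≤ μ i o) (hμ1 : ∀ i, ∑ o, μ i o = 1)
    (hν0 : ∀ i o, 0 ≤ ν i o)
    (ε δ : ℝ)
    (hDP : ∀ i, ∀ S : Finset (Ω i), ∑ o ∈ S, μ i o ≤ Real.exp ε * ∑ o ∈ S, ν i o + δ) :
    ∀ S : Finset ((i : Fin k) → Ω i),
      ∑ o ∈ S, ∏ i, μ i (o i) ≤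
        Real.exp ((k : ℝ) * ε) * ∑ o ∈ S, ∏ i, ν i (o i) + (k : ℝ) * δ := by
  intro S
  set t : (i : Fin k) → Ω i → ℝ := fun i o => min (μ i o) (Real.exp ε * ν i o)
  have ht0 (i) (o) : 0 ≤ t i o := le_min (hμ0 i o) (mul_nonneg (Real.exp_pos ε).le (hν0 i o))
  have htμ (i) (o) : t i o ≤ μ i o := min_le_left _ _
  have htruncated : ∑ o ∈ S, ∏ i, t i (o i) ≤
      Real.exp ((k : ℝ) * ε) * ∑ o ∈ S, ∏ i, ν i (o i) := by
    rw [mul_sum]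
    refine sum_le_sum fun o _ => ?_
    calc ∏ i, t i (o i) ≤ ∏ i, Real.exp ε * ν i (o i) :=
          prod_le_prod (fun i _ => ht0 i (o i)) (fun i _ => min_le_right _ _)
      _ = Real.exp ((k : ℝ) * ε) * ∏ i, ν i (o i) := by
          rw [prod_mul_distrib, prod_const, card_univ, Fintype.card_fin, ← Real.exp_nat_mul]
  have hexcess : ∑ o ∈ S, (∏ i, μ i (o i) - ∏ i, t i (o i)) ≤ k * δ :=
    calc ∑ o ∈ S, (∏ i, μ i (o i) - ∏ i, t i (o i))
        ≤ ∑ o : (i : Fin k) → Ω i, (∏ i, μ i (o i) - ∏ i, t i (o i)) :=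
          sum_le_univ_sum_of_nonneg fun o => sub_nonneg.2
            (prod_le_prod (fun i _ => ht0 i (o i)) (fun i _ => htμ i (o i)))
      _ ≤ ∑ i, ∑ y, (μ i y - t i y) := Fintype.sum_prod_sub_prod_le_sum_sum_sub ht0 htμ hμ1
      _ ≤ k * δ := by
          refine (sum_le_sum fun i _ => sum_sub_min_le_of_forall_sum_le (hDP i)).trans_eq ?_
          simp
  rw [sum_sub_distrib] at hexcess
  linarith

/-- Basic composition of differential privacy: if each pair `(μ i, ν i)` satisfies the
`(ε, δ)`-differential-privacy inequality, then the product pair satisfies the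
`(k·ε, k·δ)`-differential-privacy inequality. -/
theorem dp_composition (k : ℕ) (Ω : Fin k → Type*) [∀ i, Fintype (Ω i)]
    (μ ν : (i : Fin k) → Ω i → ℝ)
    (hμ0 : ∀ i o, 0 ≤ μ i o) (hμ1 : ∀ i, ∑ o, μ i o = 1)
    (hν0 : ∀ i o, 0 ≤ ν i o) (hν1 : ∀ i, ∑ o, ν i o = 1)
    (ε δ : ℝ) (hδ : 0 ≤ δ)
    (hDP : ∀ i, ∀ S : Finset (Ω i), ∑ o ∈ S, μ i o ≤ Real.exp ε * ∑ o ∈ S, ν i o + δ) :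
    ∀ S : Finset ((i : Fin k) → Ω i),
      ∑ o ∈ S, ∏ i, μ i (o i) ≤
        Real.exp ((k : ℝ) * ε) * ∑ o ∈ S, ∏ i, ν i (o i) + (k : ℝ) * δ :=
  dp_composition_general k Ω μ ν hμ0 hμ1 hν0 ε δ hDP
end
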